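/- arXiv:1209.1358 — 4 statements merged into one kernel-verified Lean document; each statement's English description precedes it below -/
import Mathlib

section
/- Let G be a graph and B a set of 'Byzantine' vertices such that any two distinct vertices of B are at graph distance at least 5, and such that around every b ∈ B the 8 surrounding vertices form a cycle whose removal of b leaves a path between any two neighbors of b (as in a torus with N > 5). Then in an N×N torus (N > 5) with such a set B, for any two correct vertices u and v there exists a path from u to v using only correct vertices (vertices not in B). -/
/-!
Each vertex `b` of the torus is surrounded by the 8-cycle of the vertices one king move away,
which passes through all neighbours of `b` and stays within graph distance 2 of `b`. Since
Byzantine vertices are at distance at least 5 from each other, this cycle contains no Byzantine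
vertex, so every walk between correct vertices can bypass each Byzantine vertex along it. The torus
being connected, so is the graph induced on the correct vertices.
-/

/-- The `N × N` torus network. -/
def torus (N : ℕ) : SimpleGraph (ZMod N × ZMod N) :=
  SimpleGraph.fromRel (fun a b =>
    (a.1 = b.1 ∧ a.2 = b.2 + 1) ∨ (a.2 = b.2 ∧ a.1 = b.1 + 1))

namespace SimpleGraph

theorem reachable_add_nsmul {A : Type*} [AddMonoid A] {G : SimpleGraph A} {d : A}
    (h : ∀ z, G.Reachable z (z + d)) (z : A) (k : ℕ) : G.Reachable z (z + k • d) := by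
  induction k with
  | zero => simp
  | succ k ih => simpa [succ_nsmul, add_assoc] using ih.trans (h (z + k • d))

variable {V : Type*} {G : SimpleGraph V}

theorem Walk.exists_walk_support_subset {u v x y : V} (c : G.Walk u v)
    (hx : x ∈ c.support) (hy : y ∈ c.support) :
    ∃ w : G.Walk x y, w.support ⊆ c.support := by
  classical
  refine ⟨(c.takeUntil x hx).reverse.append (c.takeUntil y hy), ?_⟩
  rw [support_append, support_reverse, List.append_subset, List.reverse_subset]
  exact ⟨c.support_takeUntil_subset_support hx,
    fun _ hz => c.support_takeUntil_subset_support hy (List.mem_of_mem_tail hz)⟩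

theorem Reachable.exists_walk_of_induce {s : Set V} {u v : s} (h : (G.induce s).Reachable u v) :
    ∃ w : G.Walk u v, ∀ x ∈ w.support, x ∈ s := by
  obtain ⟨w⟩ := h
  refine ⟨w.map (Embedding.induce s).toHom, fun x hx => ?_⟩
  obtain ⟨y, -, rfl⟩ := List.mem_map.1 (w.support_map _ ▸ hx)
  exact y.2

theorem Preconnected.induce_compl_of_detour (hG : G.Preconnected) {B : Set V}
    (hind : ∀ b ∈ B, ∀ x, G.Adj b x → x ∉ B)
    (hdetour : ∀ b ∈ B, ∀ x y : ↥Bᶜ, G.Adj b x → G.Adj b y →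
      (G.induce Bᶜ).Reachable x y) :
    (G.induce Bᶜ).Preconnected := by
  suffices ∀ {x v} (p : G.Walk x v) (hv : v ∈ Bᶜ) (u : ↥Bᶜ), (u : V) = x ∨ G.Adj u x →
      (G.induce Bᶜ).Reachable u ⟨v, hv⟩ from
    fun u ⟨v, hv⟩ => this (hG u v).some hv u (.inl rfl)
  intro x v p
  induction p with
  | nil =>
    rintro hv u (rfl | hu)
    exacts [.rfl, (induce_adj.2 hu).reachable]
  | @cons x y _ hxy p ih =>
    rintro hv u (rfl | hux)
    · exact ih hv u (.inr hxy)
    by_cases hx : x ∈ B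
    · have hy : y ∈ Bᶜ := hind x hx y hxy
      exact (hdetour x hx u ⟨y, hy⟩ hux.symm hxy).trans (ih hv ⟨y, hy⟩ (.inl rfl))
    · have hux' : (G.induce Bᶜ).Adj u ⟨x, hx⟩ := induce_adj.2 hux
      exact hux'.reachable.trans (ih hv ⟨x, hx⟩ (.inr hxy))

end SimpleGraph

section Torus

open SimpleGraph

variable {N : ℕ}

theorem torus_reachable_add {z d : ZMod N × ZMod N} (hd : d = (1, 0) ∨ d = (0, 1)) :
    (torus N).Reachable z (z + d) := by
  by_cases h : z = z + d
  · rw [← h]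
  · refine Adj.reachable ((fromRel_adj _ _ _).2 ⟨h, .inr ?_⟩)
    rcases hd with rfl | rfl <;> simp

theorem torus_preconnected [NeZero N] : (torus N).Preconnected := by
  intro u v
  have hv : v = u + (v - u).1.val • (1, 0) + (v - u).2.val • (0, 1) := by
    ext <;> simp
  rw [hv]
  exact (reachable_add_nsmul (fun _ => torus_reachable_add (.inl rfl)) _ _).trans
    (reachable_add_nsmul (fun _ => torus_reachable_add (.inr rfl)) _ _)

theorem torus_adj_iff (hN : 1 < N) {x y : ZMod N × ZMod N} :
    (torus N).Adj x y ↔ x.1 = y.1 ∧ (x.2 = y.2 + 1 ∨ y.2 = x.2 + 1) ∨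
      x.2 = y.2 ∧ (x.1 = y.1 + 1 ∨ y.1 = x.1 + 1) := by
  have : Fact (1 < N) := ⟨hN⟩
  rw [torus, fromRel_adj]
  refine ⟨fun h => by grind, fun h => ⟨?_, by grind⟩⟩
  rintro rfl
  simp at h

theorem torus_exists_ring (hN : 1 < N) (i j : ZMod N) :
    ∃ c : (torus N).Walk (i, j + 1) (i, j + 1),
      (∀ y, (torus N).Adj (i, j) y → y ∈ c.support) ∧
      ∀ z ∈ c.support, z ≠ (i, j) ∧ (torus N).dist (i, j) z ≤ 2 := by
  have : Fact (1 < N) := ⟨hN⟩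
  have hone : (1 : ZMod N) ≠ 0 := one_ne_zero
  have adj := fun x y => (torus_adj_iff hN (x := x) (y := y)).2
  let c : (torus N).Walk (i, j + 1) (i, j + 1) :=
    .cons (adj (i, j + 1) (i + 1, j + 1) (by grind)) <|
    .cons (adj (i + 1, j + 1) (i + 1, j) (by grind)) <|
    .cons (adj (i + 1, j) (i + 1, j - 1) (by grind)) <|
    .cons (adj (i + 1, j - 1) (i, j - 1) (by grind)) <|
    .cons (adj (i, j - 1) (i - 1, j - 1) (by grind)) <|
    .cons (adj (i - 1, j - 1) (i - 1, j) (by grind)) <|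
    .cons (adj (i - 1, j) (i - 1, j + 1) (by grind)) <|
    .cons (adj (i - 1, j + 1) (i, j + 1) (by grind)) .nil
  have two_steps (x y z) (hxy) (hyz) : (torus N).dist x z ≤ 2 :=
    dist_le (.cons (adj x y hxy) (.cons (adj y z hyz) .nil))
  refine ⟨c, fun y hy => ?_, fun z hz => ?_⟩
  · rw [torus_adj_iff hN] at hy
    simp only [c, Walk.support_cons, Walk.support_nil, List.mem_cons]
    grind
  simp only [c, Walk.support_cons, Walk.support_nil, List.mem_cons, List.not_mem_nil,
    or_false] at hz
  rcases hz with rfl | rfl | rfl | rfl | rfl | rfl | rfl | rfl | rfl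
  all_goals refine ⟨by simp [hone], ?_⟩
  -- each vertex of the ring is a neighbour of `(i, j)` or a neighbour of `(i ± 1, j)`
  all_goals first
    | exact (dist_le (Walk.cons (adj _ _ (by grind)) .nil)).trans (by norm_num)
    | exact two_steps _ (i + 1, j) _ (by grind) (by grind)
    | exact two_steps _ (i - 1, j) _ (by grind) (by grind)

theorem torus_exists_detour (hN : 1 < N) {b x y : ZMod N × ZMod N}
    (hx : (torus N).Adj b x) (hy : (torus N).Adj b y) :
    ∃ w : (torus N).Walk x y, ∀ z ∈ w.support, z ≠ b ∧ (torus N).dist b z ≤ 2 := by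
  obtain ⟨c, hnbr, hc⟩ := torus_exists_ring hN b.1 b.2
  obtain ⟨w, hw⟩ := c.exists_walk_support_subset (hnbr x hx) (hnbr y hy)
  exact ⟨w, fun z hz => hc z (hw hz)⟩

end Torus

/-- In an `N × N` torus (`N > 5`), if the Byzantine vertices `B` are pairwise at
graph distance at least 5, then for any two correct vertices `u` and `v` there
is a path from `u` to `v` using only correct vertices (i.e. the subgraph induced
on the correct vertices is connected). -/
theorem torus_correct_vertices_connected (N : ℕ) (hN : 5 < N)
    (B : Set (ZMod N × ZMod N))
    (hB : ∀ b ∈ B, ∀ b' ∈ B, b ≠ b' → 5 ≤ (torus N).dist b b') :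
    ∀ u v : ZMod N × ZMod N, u ∉ B → v ∉ B →
      ∃ w : (torus N).Walk u v, ∀ x ∈ w.support, x ∉ B := by
  have : NeZero N := ⟨by omega⟩
  have near_correct (b) (hb : b ∈ B) (z) (hzb : z ≠ b) (hz : (torus N).dist b z ≤ 2) :
      z ∉ B :=
    fun hzB => by linarith [hB b hb z hzB hzb.symm]
  have hnbr (b) (hb : b ∈ B) (x) (hx : (torus N).Adj b x) : x ∉ B :=
    near_correct b hb x hx.ne' ((SimpleGraph.dist_le hx.toWalk).trans (by simp))
  have hconn : ((torus N).induce Bᶜ).Preconnected := by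
    refine torus_preconnected.induce_compl_of_detour hnbr fun b hb x y hx hy => ?_
    obtain ⟨w, hw⟩ := torus_exists_detour (by omega) hx hy
    exact (w.induce Bᶜ fun z hz => near_correct b hb z (hw z hz).1 (hw z hz).2).reachable
  exact fun u v hu hv => (hconn ⟨u, hu⟩ ⟨v, hv⟩).exists_walk_of_induce
end

section
/- Safety of the trigger protocol: model an execution as a sequence of message-send events where a Byzantine vertex may send arbitrary standard messages (m) and trigger messages (m,S), and a correct vertex only delivers a message m when it has received (m) from some neighbor q and a trigger message (m,S) with q ∉ S formed by a chain of at most H forwarding hops each appending the sender to S. If any two Byzantine vertices are at graph distance at least H+2, and the source never sends a false message m′, then no correct vertex ever delivers m′. Formally: suppose a correct vertex u delivers m′; then by backward induction along the trigger-message chain of length H+1, each forwarder must be a correct vertex within H+1 hops of the Byzantine neighbor q that sent (m′) to u, and the cardinality of the visited-set S simultaneously satisfies card(S) ≤ H and card(S) ≥ H+1, a contradiction. -/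
/-- Messages of the trigger protocol: standard messages `(m)`, trigger messages
`(m, S)` carrying the set `S` of visited vertices, and a pseudo-message `dlvr m`
recording that a vertex delivers `m`. -/
inductive ProtoMsg (M V : Type) where
  | std : M → ProtoMsg M V
  | trig : M → Finset V → ProtoMsg M V
  | dlvr : M → ProtoMsg M V

/-- `Proto G B s m H u msg` : in some execution of the trigger protocol on the
graph `G` with Byzantine set `B`, correct source `s` broadcasting the authentic
message `m`, and hop parameter `H`, vertex `u` may send `msg` (for `std`/`trig`),
respectively deliver the corresponding message (for `dlvr`).

* Byzantine vertices may send arbitrary standard and trigger messages.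
* The source delivers its own message `m` (and hence, by the last two rules,
  initially multicasts `(m)` and `(m, ∅)`).
* RECEPTION: a correct vertex receiving a standard message directly from the
  source delivers it.
* TRANSMISSION: a correct vertex receiving `(m', S)` from a neighbor `q` with
  `q ∉ S` and `card S ≤ H - 1` stores and multicasts `(m', S ∪ {q})`.
* DECISION: a correct vertex `u` delivers `m'` when it has received `(m')` from
  a (non-source) neighbor `q` (so `(m', q) ∈ Wait`) and has stored a trigger
  message `(m', S)` (received as `(m', S \ {y})` from a neighbor `y`) with
  `q ∉ S`.
* On delivering `m'`, a correct vertex multicasts `(m')` and `(m', ∅)`. -/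
inductive Proto {V M : Type} [DecidableEq V] (G : SimpleGraph V) (B : Set V)
    (s : V) (m : M) (H : ℕ) : V → ProtoMsg M V → Prop where
  | byz_std {u : V} (m' : M) : u ∈ B → Proto G B s m H u (.std m')
  | byz_trig {u : V} (m' : M) (S : Finset V) : u ∈ B → Proto G B s m H u (.trig m' S)
  | src : Proto G B s m H s (.dlvr m)
  | recv_src {u : V} {m' : M} : u ∉ B → G.Adj u s → Proto G B s m H s (.std m') →
      Proto G B s m H u (.dlvr m')
  | fwd {u q : V} {m' : M} {S : Finset V} : u ∉ B → G.Adj u q →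
      Proto G B s m H q (.trig m' S) → q ∉ S → S.card ≤ H - 1 →
      Proto G B s m H u (.trig m' (insert q S))
  | decide {u q y : V} {m' : M} {S : Finset V} : u ∉ B → G.Adj u q → q ≠ s →
      Proto G B s m H q (.std m') →
      G.Adj u y → Proto G B s m H y (.trig m' S) → y ∉ S → S.card ≤ H - 1 →
      q ∉ insert y S → Proto G B s m H u (.dlvr m')
  | dlvr_std {u : V} {m' : M} : Proto G B s m H u (.dlvr m') →
      Proto G B s m H u (.std m')
  | dlvr_trig {u : V} {m' : M} : Proto G B s m H u (.dlvr m') →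
      Proto G B s m H u (.trig m' (∅ : Finset V))

/-! A forged message `m' ≠ m` can only originate at Byzantine vertices, and every trigger
message `(m', S)` in circulation has a Byzantine vertex among its visited set (or its sender)
within `#S ≤ H - 1` hops of its sender. At a decision for `m'` the standard message comes from a
Byzantine neighbour `q` of `u`, the trigger from a neighbour `y`, and `q` is not in the visited
set; so two distinct Byzantine vertices are joined by a walk of length at most `H + 1`,
contradicting `D ≥ H + 2`. -/

open SimpleGraph Finset

section

variable {V M : Type} [DecidableEq V]

def ForgeryInvariant (G : SimpleGraph V) (B : Set V) (m' : M) (u : V) : ProtoMsg M V → Prop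
  | .std m'' => m'' = m' → u ∈ B
  | .trig m'' S => m'' = m' → ∃ b ∈ B, b ∈ insert u S ∧ ∃ p : G.Walk u b, p.length ≤ #S
  | .dlvr m'' => m'' ≠ m'

theorem forgeryInvariant_of_proto {G : SimpleGraph V} {B : Set V} {s : V} {m m' : M} {H : ℕ}
    (hH : 1 ≤ H) (hs : s ∉ B) (hD : ∀ b ∈ B, ∀ b' ∈ B, b ≠ b' → H + 2 ≤ G.dist b b')
    (hm' : m' ≠ m) {u : V} {msg : ProtoMsg M V} (h : Proto G B s m H u msg) :
    ForgeryInvariant G B m' u msg := by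
  induction h with
  | byz_std _ hu => exact fun _ => hu
  | byz_trig _ _ hu => exact fun _ => ⟨_, hu, mem_insert_self _ _, .nil, Nat.zero_le _⟩
  | src => exact fun h => hm' h.symm
  | recv_src _ _ _ ih => exact fun h => hs (ih h)
  | fwd _ hadj _ hqS _ ih =>
    intro h
    obtain ⟨b, hb, hbS, p, hp⟩ := ih h
    refine ⟨b, hb, mem_insert_of_mem hbS, .cons hadj p, ?_⟩
    rw [Walk.length_cons, card_insert_of_notMem hqS]
    omega
  | @decide u q y _ S _ hadjq _ _ hadjy _ _ hcard hqyS ihq ihy =>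
    rintro rfl
    obtain ⟨b, hb, hbS, p, hp⟩ := ihy rfl
    have hqb : q ≠ b := fun hqb => hqyS (hqb ▸ hbS)
    have hfar := hD q (ihq rfl) b hb hqb
    -- the walk `q – u – y ⇝ b` has length at most `(H - 1) + 2`
    have hnear := G.dist_le (.cons hadjq.symm (.cons hadjy p))
    rw [Walk.length_cons, Walk.length_cons] at hnear
    omega
  | dlvr_std _ ih => exact fun h => absurd h ih
  | dlvr_trig _ ih => exact fun h => absurd h ih

end

/-- **Network safety.** If the source is correct and any two distinct Byzantine
vertices are at graph distance at least `H + 2`, then no correct vertex ever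
delivers a false message `m' ≠ m`. -/
theorem network_safety {V M : Type} [DecidableEq V] (G : SimpleGraph V)
    (B : Set V) (s : V) (m : M) (H : ℕ) (hH : 1 ≤ H) (hs : s ∉ B)
    (hD : ∀ b ∈ B, ∀ b' ∈ B, b ≠ b' → H + 2 ≤ G.dist b b') :
    ∀ u : V, u ∉ B → ∀ m' : M, m' ≠ m → ¬ Proto G B s m H u (.dlvr m') :=
  fun _ _ _ hm' h => forgeryInvariant_of_proto hH hs hD hm' h rfl
end

section
/- Tightness of the safety bound: if there exist two Byzantine vertices b and c joined by a path b = p₀, p₁, ..., p_{H+1} = c of length H+1 in which p₁, ..., p_H are correct, then there is a protocol execution in which the correct vertex p₁ delivers a false message m′. Specifically, b sends (m′) to p₁, c sends the trigger (m′,∅) to p_H, and the trigger is forwarded along p_H, p_{H−1}, ..., p₁, accumulating a visited set of size at most H−1 at each forwarding step and arriving at p₁ as (m′,S) with card(S) = H and b ∉ S, so p₁'s delivery condition is satisfied. -/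
/-! The Byzantine endpoint `p (H + 1)` injects the trigger `(m', ∅)`, which the correct vertices
`p H, …, p 2` forward towards `p 1`; the visited set that `p k` sends is `{p (k+1), …, p (H+1)}`,
of size `H + 1 - k`, so the hop bound `H` is never exceeded. Meanwhile the Byzantine endpoint `p 0`
sends `(m')` to `p 1`, and since `p 0` lies outside the visited set `{p 2, …, p (H+1)}` of the
trigger that `p 1` receives from `p 2`, the decision rule makes `p 1` deliver `m'`. -/

section PathSegment

variable {V : Type} [DecidableEq V] (p : ℕ → V) {j k n : ℕ}

theorem card_image_Ioc (hinj : Set.InjOn p (Set.Icc k n)) :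
    ((Finset.Ioc k n).image p).card = n - k := by
  rw [Finset.card_image_of_injOn (hinj.mono (by simp [Set.Ioc_subset_Icc_self])), Nat.card_Ioc]

theorem apply_notMem_image_Ioc (hinj : Set.InjOn p (Set.Icc j n)) (hjk : j ≤ k) (hjn : j ≤ n) :
    p j ∉ (Finset.Ioc k n).image p := by
  intro hmem
  obtain ⟨i, hi, hij⟩ := Finset.mem_image.mp hmem
  rw [Finset.mem_Ioc] at hi
  have := hinj ⟨by omega, hi.2⟩ ⟨le_rfl, hjn⟩ hij
  omega

theorem image_Ioc_eq_insert (hkn : k < n) :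
    (Finset.Ioc k n).image p = insert (p (k + 1)) ((Finset.Ioc (k + 1) n).image p) := by
  rw [← Finset.image_insert, ← Order.succ_eq_add_one, Finset.insert_Ioc_succ_left_eq_Ioc hkn]

end PathSegment

namespace Proto

variable {V M : Type} [DecidableEq V] {G : SimpleGraph V} {B : Set V} {s : V} {m : M} {H : ℕ}

theorem trig_along_path (m' : M) (p : ℕ → V) {k n : ℕ} (hn : p n ∈ B)
    (hadj : ∀ i, k ≤ i → i < n → G.Adj (p i) (p (i + 1)))
    (hcor : ∀ i, k ≤ i → i < n → p i ∉ B) (hinj : Set.InjOn p (Set.Icc k n)) (hlen : n ≤ k + H)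
    {j : ℕ} (hkj : k ≤ j) (hjn : j ≤ n) :
    Proto G B s m H (p j) (.trig m' ((Finset.Ioc j n).image p)) := by
  induction hjn using Nat.decreasingInduction with
  | self => simpa using byz_trig m' ∅ hn
  | of_succ j hjn ih =>
    have hinj' : Set.InjOn p (Set.Icc (j + 1) n) := hinj.mono (Set.Icc_subset_Icc_left (by omega))
    rw [image_Ioc_eq_insert p hjn]
    refine fwd (hcor j hkj hjn) (hadj j hkj hjn) (ih (by omega))
      (apply_notMem_image_Ioc p hinj' le_rfl hjn) ?_
    rw [card_image_Ioc p hinj']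
    omega

end Proto

/-- **Tightness of the safety bound.** If two Byzantine vertices `p 0` and
`p (H+1)` are joined by a path of length `H + 1` whose interior vertices
`p 1, …, p H` are correct, then there is an execution in which the correct
vertex `p 1` delivers an arbitrary false message `m'`. -/
theorem safety_bound_tight {V M : Type} [DecidableEq V] (G : SimpleGraph V)
    (B : Set V) (s : V) (m : M) (H : ℕ) (hH : 1 ≤ H) (hs : s ∉ B) (m' : M)
    (p : ℕ → V)
    (hb : p 0 ∈ B) (hc : p (H + 1) ∈ B)
    (hadj : ∀ i < H + 1, G.Adj (p i) (p (i + 1)))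
    (hcor : ∀ i, 1 ≤ i → i ≤ H → p i ∉ B)
    (hinj : ∀ i ≤ H + 1, ∀ j ≤ H + 1, p i = p j → i = j) :
    Proto G B s m H (p 1) (.dlvr m') := by
  have hinj₀ : Set.InjOn p (Set.Icc 0 (H + 1)) := fun i hi j hj hij => hinj i hi.2 j hj.2 hij
  have hinj₂ : Set.InjOn p (Set.Icc 2 (H + 1)) := hinj₀.mono (Set.Icc_subset_Icc_left (by omega))
  have htrig : Proto G B s m H (p 2) (.trig m' ((Finset.Ioc 2 (H + 1)).image p)) :=
    Proto.trig_along_path m' p hc (fun i _ hi => hadj i hi)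
      (fun i hi hiH => hcor i (by omega) (by omega)) hinj₂ (by omega) le_rfl (by omega)
  refine Proto.decide (hcor 1 le_rfl hH) (hadj 0 (by omega)).symm (fun h => hs (h ▸ hb))
    (Proto.byz_std m' hb) (hadj 1 (by omega)) htrig
    (apply_notMem_image_Ioc p hinj₂ le_rfl (by omega)) ?_ ?_
  · rw [card_image_Ioc p hinj₂]
    omega
  · rw [← image_Ioc_eq_insert p (by omega)]
    exact apply_notMem_image_Ioc p hinj₀ (by omega) (by omega)
end

section
/- Reliable set extension: assume safety holds (no correct vertex ever delivers a false message). Let S be a reliable vertex set (every vertex of S eventually delivers the authentic message m in every execution), let p ∉ S be a correct vertex with a correct neighbor q ∈ S, and suppose there is a correct path of length at most H from some v ∈ S to p all of whose vertices are distinct from q. Then S ∪ {p} is also a reliable vertex set: p eventually receives (m) from q, and by induction along the path v = v₀, ..., v_N = p (N ≤ H), each v_i eventually multicasts (m, {v₀,...,v_{i−1}}), so p eventually holds (m,q) ∈ Wait and (m, {v₀,...,v_{N−1}}) ∈ Trig with q ∉ {v₀,...,v_{N−1}}, triggering delivery of m. -/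
/-!
If `q` is the source, `p` delivers `m` by RECEPTION. Otherwise the trigger message
started by `w 0` travels along the path, `w i` forwarding `(m, {w 0, …, w (i-1)})`;
the path is injective and has at most `H` edges, so every TRANSMISSION guard holds.
Together with `(m)` from `q`, which avoids the path, this fires DECISION at `p`.
-/

lemma apply_notMem_image_range {α : Type} [DecidableEq α] {w : ℕ → α} {n i : ℕ}
    (hinj : Set.InjOn w (Set.Iic n)) (hi : i ≤ n) : w i ∉ (Finset.range i).image w := by
  simp only [Finset.mem_image, Finset.mem_range, not_exists, not_and]
  intro j hj hji
  exact absurd (hinj (Set.mem_Iic.2 (by omega)) (Set.mem_Iic.2 hi) hji) (by omega)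

namespace Proto

variable {V M : Type} [DecidableEq V] {G : SimpleGraph V} {B : Set V} {s : V} {m m' : M}
  {H n : ℕ} {w : ℕ → V}

theorem trig_of_path (hn : n ≤ H) (h0 : Proto G B s m H (w 0) (.dlvr m'))
    (hadj : ∀ i < n, G.Adj (w i) (w (i + 1))) (hcor : ∀ i ≤ n, w i ∉ B)
    (hinj : Set.InjOn w (Set.Iic n)) :
    ∀ i ≤ n, Proto G B s m H (w i) (.trig m' ((Finset.range i).image w))
  | 0, _ => by simpa using dlvr_trig h0
  | i + 1, hi => by
    rw [Finset.range_add_one, Finset.image_insert]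
    exact fwd (hcor _ hi) (hadj i hi).symm (trig_of_path hn h0 hadj hcor hinj i (by omega))
      (apply_notMem_image_range hinj (by omega))
      (Finset.card_image_le.trans_eq (Finset.card_range i) |>.trans (by omega))

theorem dlvr_end_of_path {q : V} (hn : n + 1 ≤ H) (h0 : Proto G B s m H (w 0) (.dlvr m'))
    (hadj : ∀ i < n + 1, G.Adj (w i) (w (i + 1))) (hcor : ∀ i ≤ n + 1, w i ∉ B)
    (hinj : Set.InjOn w (Set.Iic (n + 1))) (hq : G.Adj (w (n + 1)) q) (hqs : q ≠ s)
    (hqm : Proto G B s m H q (.std m')) (hwq : ∀ i ≤ n, w i ≠ q) :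
    Proto G B s m H (w (n + 1)) (.dlvr m') := by
  have hq_off_path : q ∉ (Finset.range (n + 1)).image w := by
    simp only [Finset.mem_image, Finset.mem_range, not_exists, not_and]
    exact fun i hi => hwq i (by omega)
  rw [Finset.range_add_one, Finset.image_insert] at hq_off_path
  exact decide (hcor _ le_rfl) hq hqs hqm (hadj n (by omega)).symm
    (trig_of_path (by omega) h0 hadj hcor hinj n (by omega))
    (apply_notMem_image_range hinj (by omega))
    (Finset.card_image_le.trans_eq (Finset.card_range n) |>.trans (by omega)) hq_off_path

end Proto

theorem reliable_set_extension_general {V M : Type} [DecidableEq V] (G : SimpleGraph V)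
    (B : Set V) (s : V) (m : M) (H : ℕ)
    (S : Set V)
    (hSrel : ∀ x ∈ S, Proto G B s m H x (.dlvr m))
    (p : V) (hpS : p ∉ S) (hpB : p ∉ B)
    (q : V) (hqS : q ∈ S) (hpq : G.Adj p q)
    (n : ℕ) (hn : n ≤ H) (w : ℕ → V)
    (hw0 : w 0 ∈ S) (hwn : w n = p)
    (hwadj : ∀ i < n, G.Adj (w i) (w (i + 1)))
    (hwcor : ∀ i ≤ n, w i ∉ B)
    (hwinj : ∀ i ≤ n, ∀ j ≤ n, w i = w j → i = j)
    (hwq : ∀ i ≤ n, w i ≠ q) :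
    ∀ x ∈ S ∪ {p}, Proto G B s m H x (.dlvr m) := by
  rintro x (hx | rfl)
  · exact hSrel x hx
  have hq := Proto.dlvr_std (hSrel q hqS)
  by_cases hqs : q = s
  · subst hqs
    exact Proto.recv_src hpB hpq hq
  obtain ⟨k, rfl⟩ : ∃ k, n = k + 1 :=
    Nat.exists_eq_succ_of_ne_zero (by rintro rfl; exact hpS (hwn ▸ hw0))
  subst hwn
  exact Proto.dlvr_end_of_path hn (hSrel _ hw0) hwadj hwcor (fun i hi j hj => hwinj i hi j hj)
    hpq hqs hq (fun i hi => hwq i (by omega))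

/-- **Reliable set extension.** Assume safety holds (no correct vertex ever
delivers a false message). Let `S` be a reliable set of correct vertices (every
vertex of `S` eventually delivers the authentic message `m`), let `p ∉ S` be a
correct vertex with a correct neighbor `q ∈ S`, and suppose there is a correct
path `w 0, …, w n` (of pairwise distinct correct vertices, `n ≤ H`) from some
vertex `w 0 ∈ S` to `w n = p` all of whose vertices are distinct from `q`.
Then `S ∪ {p}` is also a reliable vertex set. -/
theorem reliable_set_extension {V M : Type} [DecidableEq V] (G : SimpleGraph V)
    (B : Set V) (s : V) (m : M) (H : ℕ) (hH : 1 ≤ H)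
    (hsafe : ∀ u : V, u ∉ B → ∀ m' : M, m' ≠ m → ¬ Proto G B s m H u (.dlvr m'))
    (S : Set V) (hScor : ∀ x ∈ S, x ∉ B)
    (hSrel : ∀ x ∈ S, Proto G B s m H x (.dlvr m))
    (p : V) (hpS : p ∉ S) (hpB : p ∉ B)
    (q : V) (hqS : q ∈ S) (hpq : G.Adj p q)
    (n : ℕ) (hn : n ≤ H) (w : ℕ → V)
    (hw0 : w 0 ∈ S) (hwn : w n = p)
    (hwadj : ∀ i < n, G.Adj (w i) (w (i + 1)))
    (hwcor : ∀ i ≤ n, w i ∉ B)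
    (hwinj : ∀ i ≤ n, ∀ j ≤ n, w i = w j → i = j)
    (hwq : ∀ i ≤ n, w i ≠ q) :
    ∀ x ∈ S ∪ {p}, Proto G B s m H x (.dlvr m) :=
  reliable_set_extension_general G B s m H S hSrel p hpS hpB q hqS hpq n hn w hw0 hwn hwadj hwcor
    hwinj hwq
end
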